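/- arXiv:1411.7425 — 4 statements merged into one kernel-verified Lean document; each statement's English description precedes it below -/
import Mathlib

section
/- Let m ≥ 1, let M be a real (m+1)×m matrix, let r₁ < r₂ < r₃ be three of its row indices, and let d be one of its column indices. Writing M with hats for the matrix obtained by deleting the indicated rows (superscript hats for deleted columns), one has the 'jaw move' identity: det(M_{r̂₂}) · det(M_{r̂₁,r̂₃}^{d̂}) = det(M_{r̂₁}) · det(M_{r̂₂,r̂₃}^{d̂}) + det(M_{r̂₃}) · det(M_{r̂₁,r̂₂}^{d̂}). Here M_{r̂ᵢ} denotes the m×m matrix obtained from M by deleting row rᵢ, and M_{r̂ᵢ,r̂ⱼ}^{d̂} denotes the (m−1)×(m−1) matrix obtained by deleting rows rᵢ, rⱼ and column d. -/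
/-!
The weights `a i = det M_{î}` satisfy `∑ i, (-1)^i a i • M i = 0`: for each column `c` this is the
Laplace expansion along the first column of the singular square matrix `[M_{·c} | M]`, and it
survives deleting column `d`. Substitute `(-1)^{r₂} a r₂ • M r₂ = -∑_{i ≠ r₂} (-1)^i a i • M i`
into the row of `M_{r̂₁,r̂₃}^{d̂}` coming from `r₂` and expand multilinearly. A row `i ∉ {r₁, r₃}`
already occurs in that minor, so only `i = r₁` and `i = r₃` contribute, and sliding the substituted
row to its own position turns these two determinants into `± det M_{r̂₂,r̂₃}^{d̂}` and
`± det M_{r̂₁,r̂₂}^{d̂}`.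
-/

open Matrix

namespace Fin

theorem val_succAbove {n : ℕ} (p : Fin (n + 1)) (i : Fin n) :
    (p.succAbove i : ℕ) = if (i : ℕ) < p then (i : ℕ) else (i : ℕ) + 1 := by
  unfold succAbove
  split_ifs <;> simp_all [lt_def]

theorem val_succAbove_comp_succAbove_castLT {n : ℕ} {a b : Fin (n + 2)} (hab : a < b)
    (ha : (a : ℕ) < n + 1) (x : Fin n) :
    ((b.succAbove ∘ (a.castLT ha).succAbove) x : ℕ) =
      if (x : ℕ) < a then (x : ℕ) else if (x : ℕ) + 1 < b then (x : ℕ) + 1 else (x : ℕ) + 2 := by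
  simp only [Function.comp_apply, val_succAbove, val_castLT]
  split_ifs <;> omega

theorem exists_succAbove_comp_succAbove_castLT_eq {n : ℕ} {a b : Fin (n + 2)} (hab : a < b)
    (ha : (a : ℕ) < n + 1) {i : Fin (n + 2)} (hia : i ≠ a) (hib : i ≠ b) :
    ∃ x, (b.succAbove ∘ (a.castLT ha).succAbove) x = i := by
  have hia' := val_ne_of_ne hia
  have hib' := val_ne_of_ne hib
  refine ⟨⟨if (i : ℕ) < a then i else if (i : ℕ) < b then i - 1 else i - 2,
    by split_ifs <;> omega⟩, Fin.ext ?_⟩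
  rw [val_succAbove_comp_succAbove_castLT hab]
  dsimp only
  split_ifs <;> omega

theorem val_eq_sub_one_of_succAbove_comp_succAbove_castLT_eq {n : ℕ} {a b c : Fin (n + 2)}
    (hab : a < b) (hbc : b < c) (ha : (a : ℕ) < n + 1) {t : Fin n}
    (ht : (c.succAbove ∘ (a.castLT ha).succAbove) t = b) : (t : ℕ) = b - 1 := by
  have htv := congrArg Fin.val ht
  rw [val_succAbove_comp_succAbove_castLT (hab.trans hbc)] at htv
  split_ifs at htv <;> omega

end Fin

theorem neg_one_pow_eq_neg_neg_one_pow_of_odd_add {R : Type*} [Monoid R] [HasDistribNeg R]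
    {m n : ℕ} (h : Odd (m + n)) : (-1 : R) ^ m = -(-1) ^ n :=
  calc (-1 : R) ^ m = (-1) ^ (m + n) * (-1) ^ n := by
        rw [pow_add, mul_assoc, ← pow_add, Even.neg_one_pow ⟨n, rfl⟩, mul_one]
    _ = -(-1) ^ n := by rw [h.neg_one_pow, neg_one_mul]

namespace Matrix

variable {R : Type*} [CommRing R]

theorem vecMul_neg_one_pow_mul_det_submatrix_succAbove {n : ℕ}
    (M : Matrix (Fin (n + 1)) (Fin n) R) :
    (fun i : Fin (n + 1) => (-1) ^ (i : ℕ) * (M.submatrix i.succAbove id).det) ᵥ* M = 0 := by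
  funext c
  let A : Matrix (Fin (n + 1)) (Fin (n + 1)) R := of fun i => Fin.cons (M i c) (M i)
  have hA : A.det = 0 := by
    rw [← det_transpose]
    exact det_zero_of_row_eq (Fin.succ_ne_zero c) (funext fun i => rfl)
  have hminor : ∀ i : Fin (n + 1),
      A.submatrix i.succAbove Fin.succ = M.submatrix i.succAbove id := fun _ => rfl
  rw [det_succ_column_zero] at hA
  simp only [vecMul, dotProduct, Pi.zero_apply, ← hA, hminor]
  exact Finset.sum_congr rfl fun i _ => mul_right_comm _ _ (M i c)

theorem det_updateRow_sum_smul {n ι : Type*} [DecidableEq n] [Fintype n] [Fintype ι]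
    (A : Matrix n n R) (j : n) (c : ι → R) (v : ι → n → R) :
    (A.updateRow j (∑ i, c i • v i)).det = ∑ i, c i * (A.updateRow j (v i)).det := by
  simp_rw [← det_updateRow_smul]
  exact (detRowAlternating : (n → R) [⋀^n]→ₗ[R] R).map_update_sum _ j _ A

theorem det_updateRow_submatrix_of_comp_succAbove_eq {m : Type*} {n : ℕ}
    (N : Matrix m (Fin (n + 1)) R) {f g : Fin (n + 1) → m} {a b : Fin (n + 1)}
    (hfg : f ∘ a.succAbove = g ∘ b.succAbove) :
    ((N.submatrix f id).updateRow a (N (g b))).det =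
      (-1) ^ ((a : ℕ) + b) * (N.submatrix g id).det := by
  rw [det_succ_row _ a, det_succ_row _ b, Finset.mul_sum]
  refine Finset.sum_congr rfl fun j _ => ?_
  have hminor : ((N.submatrix f id).updateRow a (N (g b))).submatrix a.succAbove j.succAbove =
      (N.submatrix g id).submatrix b.succAbove j.succAbove := by
    ext p q
    simp only [submatrix_apply, updateRow_ne (Fin.succAbove_ne a p), id]
    exact congrArg (N · _) (congrFun hfg p)
  have hsign : (-1 : R) ^ ((a : ℕ) + b) * (-1) ^ ((b : ℕ) + j) = (-1) ^ ((a : ℕ) + j) := by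
    rw [← pow_add, show (a : ℕ) + b + (b + j) = a + j + (b + b) by omega, pow_add _ (a + j : ℕ),
      Even.neg_one_pow ⟨b, rfl⟩, mul_one]
  rw [hminor, ← hsign, updateRow_self]
  simp only [submatrix_apply, id]
  ring

theorem sum_mul_det_updateRow_submatrix_eq_zero {m n : Type*} [Fintype m] [Fintype n]
    [DecidableEq n] (N : Matrix m n R) {x : m → R} (hx : x ᵥ* N = 0) (e : n → m) (t : n)
    (S : Finset m) (hS : ∀ i ∉ S, ∃ y ≠ t, e y = i) :
    ∑ i ∈ S, x i * ((N.submatrix e id).updateRow t (N i)).det = 0 := by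
  rw [Finset.sum_subset (Finset.subset_univ S) fun i _ hi => ?_]
  · have hexpand := det_updateRow_sum_smul (N.submatrix e id) t x N
    rw [← vecMul_eq_sum, hx] at hexpand
    rw [← hexpand]
    exact det_eq_zero_of_row_eq_zero t fun j => by simp
  · obtain ⟨y, hyt, rfl⟩ := hS i hi
    change _ * ((N.submatrix e id).updateRow t ((N.submatrix e id) y)).det = 0
    rw [det_updateRow_eq_zero hyt, mul_zero]

theorem neg_one_pow_mul_det_updateRow_submatrix_succAbove_castLT_left {s : ℕ}
    (N : Matrix (Fin (s + 3)) (Fin (s + 1)) R) {r₁ r₂ r₃ : Fin (s + 3)} (h12 : r₁ < r₂)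
    (h23 : r₂ < r₃) (h₁ : (r₁ : ℕ) < s + 2) (h₂ : (r₂ : ℕ) < s + 2) {t : Fin (s + 1)}
    (ht : (r₃.succAbove ∘ (r₁.castLT h₁).succAbove) t = r₂) :
    (-1) ^ (r₁ : ℕ) *
        ((N.submatrix (r₃.succAbove ∘ (r₁.castLT h₁).succAbove) id).updateRow t (N r₁)).det =
      -((-1) ^ (r₂ : ℕ) * (N.submatrix (r₃.succAbove ∘ (r₂.castLT h₂).succAbove) id).det) := by
  have hv₁₃ := Fin.val_succAbove_comp_succAbove_castLT (h12.trans h23) h₁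
  have hv₂₃ := Fin.val_succAbove_comp_succAbove_castLT h23 h₂
  have htv := Fin.val_eq_sub_one_of_succAbove_comp_succAbove_castLT_eq h12 h23 h₁ ht
  obtain ⟨u, hu⟩ : ∃ u : Fin (s + 1), (u : ℕ) = r₁ := ⟨⟨r₁, by omega⟩, rfl⟩
  have hrow : N r₁ = N ((r₃.succAbove ∘ (r₂.castLT h₂).succAbove) u) :=
    congrArg N <| Fin.ext <| by rw [hv₂₃, hu]; split_ifs <;> omega
  have hslide : (r₃.succAbove ∘ (r₁.castLT h₁).succAbove) ∘ t.succAbove =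
      (r₃.succAbove ∘ (r₂.castLT h₂).succAbove) ∘ u.succAbove := funext fun p => Fin.ext <| by
    simp only [Function.comp_apply] at hv₁₃ hv₂₃ ⊢
    rw [hv₁₃, hv₂₃, Fin.val_succAbove, Fin.val_succAbove, htv, hu]
    split_ifs <;> omega
  rw [hrow, det_updateRow_submatrix_of_comp_succAbove_eq N hslide, ← mul_assoc, ← pow_add,
    neg_one_pow_eq_neg_neg_one_pow_of_odd_add (n := r₂) ⟨r₁ + r₂ - 1, by omega⟩, neg_mul]

theorem neg_one_pow_mul_det_updateRow_submatrix_succAbove_castLT_right {s : ℕ}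
    (N : Matrix (Fin (s + 3)) (Fin (s + 1)) R) {r₁ r₂ r₃ : Fin (s + 3)} (h12 : r₁ < r₂)
    (h23 : r₂ < r₃) (h₁ : (r₁ : ℕ) < s + 2) {t : Fin (s + 1)}
    (ht : (r₃.succAbove ∘ (r₁.castLT h₁).succAbove) t = r₂) :
    (-1) ^ (r₃ : ℕ) *
        ((N.submatrix (r₃.succAbove ∘ (r₁.castLT h₁).succAbove) id).updateRow t (N r₃)).det =
      -((-1) ^ (r₂ : ℕ) * (N.submatrix (r₂.succAbove ∘ (r₁.castLT h₁).succAbove) id).det) := by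
  have hv₁₃ := Fin.val_succAbove_comp_succAbove_castLT (h12.trans h23) h₁
  have hv₁₂ := Fin.val_succAbove_comp_succAbove_castLT h12 h₁
  have htv := Fin.val_eq_sub_one_of_succAbove_comp_succAbove_castLT_eq h12 h23 h₁ ht
  obtain ⟨u, hu⟩ : ∃ u : Fin (s + 1), (u : ℕ) = r₃ - 2 := ⟨⟨r₃ - 2, by omega⟩, rfl⟩
  have hrow : N r₃ = N ((r₂.succAbove ∘ (r₁.castLT h₁).succAbove) u) :=
    congrArg N <| Fin.ext <| by rw [hv₁₂, hu]; split_ifs <;> omega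
  have hslide : (r₃.succAbove ∘ (r₁.castLT h₁).succAbove) ∘ t.succAbove =
      (r₂.succAbove ∘ (r₁.castLT h₁).succAbove) ∘ u.succAbove := funext fun p => Fin.ext <| by
    simp only [Function.comp_apply] at hv₁₃ hv₁₂ ⊢
    rw [hv₁₃, hv₁₂, Fin.val_succAbove, Fin.val_succAbove, htv, hu]
    split_ifs <;> omega
  rw [hrow, det_updateRow_submatrix_of_comp_succAbove_eq N hslide, ← mul_assoc, ← pow_add,
    neg_one_pow_eq_neg_neg_one_pow_of_odd_add (n := r₂) ⟨r₂ + r₃ - 2, by omega⟩, neg_mul]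

theorem jaw_move_of_vecMul_eq_zero {s : ℕ} (N : Matrix (Fin (s + 3)) (Fin (s + 1)) R)
    (a : Fin (s + 3) → R) (ha : (fun i : Fin (s + 3) => (-1) ^ (i : ℕ) * a i) ᵥ* N = 0)
    {r₁ r₂ r₃ : Fin (s + 3)} (h12 : r₁ < r₂) (h23 : r₂ < r₃)
    (h₁ : (r₁ : ℕ) < s + 2) (h₂ : (r₂ : ℕ) < s + 2) :
    a r₂ * (N.submatrix (r₃.succAbove ∘ (r₁.castLT h₁).succAbove) id).det =
      a r₁ * (N.submatrix (r₃.succAbove ∘ (r₂.castLT h₂).succAbove) id).det +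
      a r₃ * (N.submatrix (r₂.succAbove ∘ (r₁.castLT h₁).succAbove) id).det := by
  have h13 := h12.trans h23
  set e₁₃ := r₃.succAbove ∘ (r₁.castLT h₁).succAbove
  obtain ⟨t, ht⟩ := Fin.exists_succAbove_comp_succAbove_castLT_eq h13 h₁ h12.ne' h23.ne
  have hsum := sum_mul_det_updateRow_submatrix_eq_zero N ha e₁₃ t {r₁, r₂, r₃} fun i hi => by
    simp only [Finset.mem_insert, Finset.mem_singleton, not_or] at hi
    obtain ⟨y, rfl⟩ := Fin.exists_succAbove_comp_succAbove_castLT_eq h13 h₁ hi.1 hi.2.2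
    exact ⟨y, fun hyt => hi.2.1 (hyt ▸ ht), rfl⟩
  have hrow₂ : (N.submatrix e₁₃ id).updateRow t (N r₂) = N.submatrix e₁₃ id := by
    rw [← ht]
    exact updateRow_eq_self _ t
  rw [Finset.sum_insert (by simp [h12.ne, h13.ne]), Finset.sum_insert (by simp [h23.ne]),
    Finset.sum_singleton, hrow₂] at hsum
  have hunit : IsUnit ((-1 : R) ^ (r₂ : ℕ)) := isUnit_neg_one.pow _
  refine sub_eq_zero.mp (hunit.mul_right_eq_zero.mp ?_)
  linear_combination hsum
    - a r₁ * neg_one_pow_mul_det_updateRow_submatrix_succAbove_castLT_left N h12 h23 h₁ h₂ ht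
    - a r₃ * neg_one_pow_mul_det_updateRow_submatrix_succAbove_castLT_right N h12 h23 h₁ ht

end Matrix

/-- The "jaw move" determinant identity for a real `(m+1) × m` matrix (here `m = k+1 ≥ 1`).
For rows `r₁ < r₂ < r₃` and a column `d`, writing `M` with a deleted row (and possibly a
deleted column `d`) via the order-preserving embeddings `Fin.succAbove`:
`det(M_{r̂₂}) · det(M_{r̂₁,r̂₃}^{d̂}) = det(M_{r̂₁}) · det(M_{r̂₂,r̂₃}^{d̂}) + det(M_{r̂₃}) · det(M_{r̂₁,r̂₂}^{d̂})`. -/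
theorem jaw_move (k : ℕ) (M : Matrix (Fin (k + 2)) (Fin (k + 1)) ℝ)
    (r₁ r₂ r₃ : Fin (k + 2)) (h12 : r₁ < r₂) (h23 : r₂ < r₃) (d : Fin (k + 1)) :
    (M.submatrix r₂.succAbove id).det *
      (M.submatrix (r₃.succAbove ∘
        (r₁.castLT (lt_of_lt_of_le (Fin.lt_def.mp (h12.trans h23))
          (Nat.lt_succ_iff.mp r₃.isLt))).succAbove) d.succAbove).det =
    (M.submatrix r₁.succAbove id).det *
      (M.submatrix (r₃.succAbove ∘
        (r₂.castLT (lt_of_lt_of_le (Fin.lt_def.mp h23)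
          (Nat.lt_succ_iff.mp r₃.isLt))).succAbove) d.succAbove).det +
    (M.submatrix r₃.succAbove id).det *
      (M.submatrix (r₂.succAbove ∘
        (r₁.castLT (lt_of_lt_of_le (Fin.lt_def.mp h12)
          (Nat.lt_succ_iff.mp r₂.isLt))).succAbove) d.succAbove).det := by
  rcases k with _ | s
  · omega
  have hnull : (fun i : Fin (s + 3) => (-1) ^ (i : ℕ) * (M.submatrix i.succAbove id).det) ᵥ*
      M.submatrix id d.succAbove = 0 :=
    funext fun c => congrFun (vecMul_neg_one_pow_mul_det_submatrix_succAbove M) (d.succAbove c)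
  exact jaw_move_of_vecMul_eq_zero _ _ hnull h12 h23 _ _
end

section
/- Fix n ≥ 1 and two disjoint subsets A = {a_1 < a_2 < ⋯ < a_k} and B = {b_1 < b_2 < ⋯ < b_k} of {1,…,n}. Then the minor det((M_{a_i,b_j})_{1≤i,j≤k}) is a Laurent polynomial in the small central minors of M: there exist a finitely supported function e from the small-central-minor index set S = {(x,y) : 1 ≤ x ≤ 2n, and either 1 ≤ y < n/2, or y = n/2 and x+y is odd} to ℕ and a multivariate real polynomial p in variables (X_s)_{s∈S}, such that for every n×n real matrix M one has det((M_{a_i,b_j})_{i,j}) · ∏_{s∈S} CM_s(M)^{e(s)} = p((CM_s(M))_{s∈S}). -/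
/-!
Every entry `M u v` with `u ≢ v (mod n)` is a Laurent polynomial in the small central minors;
the minor is a polynomial in such entries. With `c = ⌊(n - 1)/2⌋`, the small central minors are
the contiguous minors `CM_{t,t+c,y}` (`2y < n`) and `CM_{t,t+c+1,y}` (`2y ≤ n`), whose
anti-diagonals run along the diagonals `v - u = c` and `v - u = c + 1`. By induction on `y`,
the diagonals `c + 1 - y, …, c + y` are reached: in the window `CM_{t,t+c+1,y+1}` (resp.
`CM_{t,t+c,y+1}`) the corner entry on the diagonal `c + 1 + y` (resp. `c - y`) is the only entry
not yet reached, and expanding along its row expresses it, times the complementary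
`CM_{t+1,t+1+c,y}` (resp. `CM_{t,t+c+1,y}`), as a polynomial in the window and reached entries.
Both the window and the complementary minor are small central minors.
-/

/-- The contiguous minor `CM_{a,b,y}(M)` of an `n × n` matrix `M` (indexed by `ZMod n`,
i.e. indices are taken modulo `n`): the determinant of the `y × y` matrix whose rows are
`a, a+1, …, a+y-1` in order and whose columns are `b+y-1, …, b+1, b` in order. -/
noncomputable def contiguousMinor (n : ℕ) (M : Matrix (ZMod n) (ZMod n) ℝ)
    (a b : ℤ) (y : ℕ) : ℝ :=
  Matrix.det (Matrix.of fun i j : Fin y =>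
    M (((a + (i : ℤ)) : ℤ) : ZMod n) (((b + (y : ℤ) - 1 - (j : ℤ)) : ℤ) : ZMod n))

/-- The central minor `CM_{x,y}(M)`: the contiguous minor `CM_{a,b,y}(M)` with
`a = ⌊(x-y)/2⌋` and `b = ⌊(x-y+n-((n-1) mod 2))/2⌋`. -/
noncomputable def centralMinor (n : ℕ) (M : Matrix (ZMod n) (ZMod n) ℝ)
    (x : ℤ) (y : ℕ) : ℝ :=
  contiguousMinor n M (Int.fdiv (x - (y : ℤ)) 2)
    (Int.fdiv (x - (y : ℤ) + (n : ℤ) - (((n : ℤ) - 1) % 2)) 2) y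

/-- The index set of the small central minors: pairs `(x,y)` with `1 ≤ x ≤ 2n` and
either `1 ≤ y < n/2`, or `y = n/2` and `x + y` odd. -/
def SmallIdx (n : ℕ) : Set (ℤ × ℕ) :=
  {s | 1 ≤ s.1 ∧ s.1 ≤ 2 * (n : ℤ) ∧
    ((1 ≤ s.2 ∧ 2 * s.2 < n) ∨ (2 * s.2 = n ∧ Odd (s.1 + (s.2 : ℤ))))}

open MvPolynomial

section Determinant

variable {R S : Type*} [CommRing R] [SetLike S R] [SubringClass S R] {s : S}

theorem Matrix.det_mem {ι : Type*} [Fintype ι] [DecidableEq ι] {A : Matrix ι ι R}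
    (h : ∀ i j, A i j ∈ s) : A.det ∈ s := by
  rw [Matrix.det_apply']
  exact sum_mem fun σ _ => mul_mem (intCast_mem s _) (prod_mem fun i _ => h _ _)

theorem Matrix.det_pi_apply {X ι : Type*} [Fintype ι] [DecidableEq ι]
    (A : Matrix ι ι (X → R)) (x : X) : A.det x = (Matrix.of fun i j => A i j x).det :=
  (Pi.evalRingHom (fun _ => R) x).map_det A

theorem Matrix.mul_det_submatrix_succAbove_mem {m : ℕ}
    (A : Matrix (Fin (m + 1)) (Fin (m + 1)) R) (i j : Fin (m + 1)) (hdet : A.det ∈ s)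
    (hA : ∀ i' j', (i', j') ≠ (i, j) → A i' j' ∈ s) :
    A i j * (A.submatrix i.succAbove j.succAbove).det ∈ s := by
  set σ : R := (-1) ^ ((i : ℕ) + j)
  have hσ : σ * σ = 1 := by rw [← mul_pow, neg_one_mul, neg_neg, one_pow]
  have hexp := A.det_succ_row i
  rw [Fin.sum_univ_succAbove _ j] at hexp
  set rest := ∑ k : Fin m, (-1) ^ ((i : ℕ) + j.succAbove k) * A i (j.succAbove k) *
    (A.submatrix i.succAbove (j.succAbove k).succAbove).det
  have hrest : rest ∈ s := sum_mem fun k _ =>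
    mul_mem (mul_mem (pow_mem (neg_mem (one_mem s)) _)
      (hA _ _ fun h => Fin.succAbove_ne j k (Prod.ext_iff.1 h).2))
      (Matrix.det_mem fun i' j' => hA _ _ fun h => Fin.succAbove_ne i i' (Prod.ext_iff.1 h).1)
  have hsolve : A i j * (A.submatrix i.succAbove j.succAbove).det = σ * (A.det - rest) := by
    linear_combination (-σ) * hexp - (A i j * (A.submatrix i.succAbove j.succAbove).det) * hσ
  rw [hsolve]
  exact mul_mem (pow_mem (neg_mem (one_mem s)) _) (sub_mem hdet hrest)

end Determinant

section Laurent

variable {K R ι : Type*} [CommSemiring K] [CommSemiring R] [Algebra K R] {g : ι → R}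

theorem Finsupp.prod_pow_add (e₁ e₂ : ι →₀ ℕ) :
    (e₁ + e₂).prod (fun i m => g i ^ m) =
      (e₁.prod fun i m => g i ^ m) * e₂.prod fun i m => g i ^ m :=
  Finsupp.prod_add_index' (fun _ => pow_zero _) fun _ _ _ => pow_add _ _ _

variable (K) in
def laurentSubalgebra (g : ι → R) : Subalgebra K R where
  carrier := {f | ∃ (e : ι →₀ ℕ) (p : MvPolynomial ι K),
    f * (e.prod fun i m => g i ^ m) = aeval g p}
  mul_mem' := by
    rintro f₁ f₂ ⟨e₁, p₁, h₁⟩ ⟨e₂, p₂, h₂⟩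
    refine ⟨e₁ + e₂, p₁ * p₂, ?_⟩
    rw [Finsupp.prod_pow_add, map_mul, ← h₁, ← h₂]
    ring
  add_mem' := by
    rintro f₁ f₂ ⟨e₁, p₁, h₁⟩ ⟨e₂, p₂, h₂⟩
    refine ⟨e₁ + e₂, p₁ * monomial e₂ 1 + p₂ * monomial e₁ 1, ?_⟩
    rw [Finsupp.prod_pow_add, map_add, map_mul, map_mul, aeval_monomial, aeval_monomial, map_one,
      one_mul, one_mul, ← h₁, ← h₂]
    ring
  algebraMap_mem' c := ⟨0, C c, by rw [Finsupp.prod_zero_index, mul_one, aeval_C]⟩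

namespace laurentSubalgebra

theorem generator_mem (i : ι) : g i ∈ laurentSubalgebra K g :=
  ⟨0, X i, by rw [Finsupp.prod_zero_index, mul_one, aeval_X]⟩

theorem mem_of_mul_generator_mem {f : R} (i : ι) (h : f * g i ∈ laurentSubalgebra K g) :
    f ∈ laurentSubalgebra K g := by
  obtain ⟨e, p, hp⟩ := h
  refine ⟨e + Finsupp.single i 1, p, ?_⟩
  rw [Finsupp.prod_pow_add, Finsupp.prod_single_index (by exact pow_zero _), pow_one, ← hp]
  ring

theorem exists_forall_eval_eq {X : Type*} {g : ι → X → K} {f : X → K}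
    (hf : f ∈ laurentSubalgebra K g) :
    ∃ (e : ι →₀ ℕ) (p : MvPolynomial ι K), ∀ x,
      f x * (e.prod fun i m => g i x ^ m) = eval (fun i => g i x) p := by
  obtain ⟨e, p, hp⟩ := hf
  refine ⟨e, p, fun x => ?_⟩
  have := congrArg (Pi.evalAlgHom K (fun _ => K) x) hp
  rw [map_mul, ← AlgHom.comp_apply, comp_aeval] at this
  simpa [coe_aeval_eq_eval, Finsupp.prod, Finset.prod_apply] using this

end laurentSubalgebra

end Laurent

theorem laurentSubalgebra.apply_mem_of_det_mem {K R ι : Type*} [CommRing K] [CommRing R]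
    [Algebra K R] {g : ι → R} {m : ℕ} (A : Matrix (Fin (m + 1)) (Fin (m + 1)) R)
    (i j : Fin (m + 1)) (k : ι) (hminor : (A.submatrix i.succAbove j.succAbove).det = g k)
    (hdet : A.det ∈ laurentSubalgebra K g)
    (hA : ∀ i' j', (i', j') ≠ (i, j) → A i' j' ∈ laurentSubalgebra K g) :
    A i j ∈ laurentSubalgebra K g :=
  mem_of_mul_generator_mem k (hminor ▸ A.mul_det_submatrix_succAbove_mem i j hdet hA)

section CentralMinor

variable {n : ℕ}

def centralOffset (n : ℕ) : ℤ := ((n : ℤ) - 1) / 2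

noncomputable def smallCentralMinor (n : ℕ) (s : SmallIdx n) :
    Matrix (ZMod n) (ZMod n) ℝ → ℝ :=
  fun M => centralMinor n M s.1.1 s.1.2

theorem contiguousMinor_add_mul (M : Matrix (ZMod n) (ZMod n) ℝ) (a b q : ℤ) (y : ℕ) :
    contiguousMinor n M (a + n * q) (b + n * q) y = contiguousMinor n M a b y := by
  unfold contiguousMinor
  congr 2 with i j
  push_cast [ZMod.natCast_self]
  ring_nf

theorem centralMinor_add_two_mul_mul (M : Matrix (ZMod n) (ZMod n) ℝ) (x q : ℤ) (y : ℕ) :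
    centralMinor n M (x + 2 * (n * q)) y = centralMinor n M x y := by
  unfold centralMinor
  conv_rhs => rw [← contiguousMinor_add_mul M _ _ q]
  congr 1 <;> simp only [Int.fdiv_eq_ediv_of_nonneg _ zero_le_two] <;> omega

theorem centralMinor_two_mul_add (M : Matrix (ZMod n) (ZMod n) ℝ) (t : ℤ) (y r : ℕ)
    (hr : r ≤ 1) :
    centralMinor n M (2 * t + y + r) y = contiguousMinor n M t (t + centralOffset n + r) y := by
  unfold centralMinor centralOffset
  congr 1 <;> rw [Int.fdiv_eq_ediv_of_nonneg _ zero_le_two] <;> omega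

theorem exists_smallCentralMinor_eq {x : ℤ} {y : ℕ} (hy : 1 ≤ y)
    (h : 2 * y < n ∨ 2 * y = n ∧ Odd (x + y)) :
    ∃ s, smallCentralMinor n s = fun M => centralMinor n M x y := by
  have hn : (0 : ℤ) < 2 * n := by omega
  obtain ⟨x, q, hx₁, hx₂, rfl⟩ :
      ∃ x' q : ℤ, 1 ≤ x' ∧ x' ≤ 2 * n ∧ x = x' + 2 * (n * q) :=
    ⟨(x - 1) % (2 * n) + 1, (x - 1) / (2 * n), by linarith [Int.emod_nonneg (x - 1) hn.ne'],
      by linarith [Int.emod_lt_of_pos (x - 1) hn],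
      by linarith [Int.mul_ediv_add_emod (x - 1) (2 * n)]⟩
  refine ⟨⟨(x, y), hx₁, hx₂,
    h.imp (⟨hy, ·⟩) fun ⟨h, k, hk⟩ => ⟨h, k - n * q, ?_⟩⟩,
    funext fun M => (centralMinor_add_two_mul_mul M x q y).symm⟩
  dsimp only
  linarith

def matrixEntry (n : ℕ) (u v : ℤ) : Matrix (ZMod n) (ZMod n) ℝ → ℝ := fun M => M u v

def window (n : ℕ) (a b : ℤ) (y : ℕ) :
    Matrix (Fin y) (Fin y) (Matrix (ZMod n) (ZMod n) ℝ → ℝ) :=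
  Matrix.of fun i j => matrixEntry n (a + i) (b + y - 1 - j)

theorem det_window (a b : ℤ) (y : ℕ) :
    (window n a b y).det = fun M => contiguousMinor n M a b y := by
  funext M
  rw [Matrix.det_pi_apply]
  rfl

variable (n) in
theorem exists_smallCentralMinor_eq_det_window (t : ℤ) {y r : ℕ} (hr : r ≤ 1) (hy : 1 ≤ y)
    (h : 2 * y < n + r) :
    ∃ s, smallCentralMinor n s = (window n t (t + centralOffset n + r) y).det := by
  have hcentral : 2 * y < n ∨ 2 * y = n ∧ Odd (2 * t + y + r + y) := by
    refine (lt_or_ge (2 * y) n).imp_right fun h' => ⟨by omega, t + y, ?_⟩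
    obtain rfl : r = 1 := by omega
    push_cast
    ring
  obtain ⟨s, hs⟩ := exists_smallCentralMinor_eq hy hcentral
  exact ⟨s, by rw [hs, det_window]; exact funext fun M => centralMinor_two_mul_add M t y r hr⟩

variable (n) in
def LaurentOnDiagonals (y : ℕ) : Prop :=
  ∀ ⦃u v : ℤ⦄, 1 ≤ v - u → v - u < n → centralOffset n + 1 - y ≤ v - u →
    v - u ≤ centralOffset n + y →
      matrixEntry n u v ∈ laurentSubalgebra ℝ (smallCentralMinor n)

theorem laurentOnDiagonals_one : LaurentOnDiagonals n 1 := by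
  intro u v h₁ h₂ h₃ h₄
  have hc : centralOffset n = ((n : ℤ) - 1) / 2 := rfl
  obtain ⟨r, hr, huv⟩ : ∃ r : ℕ, r ≤ 1 ∧ v - u = centralOffset n + r :=
    ⟨(v - u - centralOffset n).toNat, by omega, by omega⟩
  obtain ⟨s, hs⟩ := exists_smallCentralMinor_eq_det_window n u (y := 1) hr le_rfl (by omega)
  have hentry : (window n u (u + centralOffset n + r) 1).det = matrixEntry n u v := by
    rw [Matrix.det_unique]
    simp only [window, Matrix.of_apply, Fin.default_eq_zero, Fin.val_zero]
    congr 1 <;> push_cast <;> omega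
  exact hentry ▸ hs ▸ laurentSubalgebra.generator_mem s

theorem LaurentOnDiagonals.matrixEntry_mem_of_sub_eq_centralOffset_add_succ {y : ℕ}
    (ih : LaurentOnDiagonals n y) (hy : 1 ≤ y) {u v : ℤ}
    (huv : v - u = centralOffset n + 1 + y) (hvu : v - u < n) :
    matrixEntry n u v ∈ laurentSubalgebra ℝ (smallCentralMinor n) := by
  have hc : centralOffset n = ((n : ℤ) - 1) / 2 := rfl
  obtain ⟨sW, hW⟩ := exists_smallCentralMinor_eq_det_window n u (y := y + 1) le_rfl
    (by omega) (by omega)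
  obtain ⟨sC, hC⟩ := exists_smallCentralMinor_eq_det_window n (u + 1) (y := y) zero_le_one
    hy (by omega)
  set W := window n u (u + centralOffset n + (1 : ℕ)) (y + 1)
  have hcorner : W 0 0 = matrixEntry n u v := by
    simp only [W, window, Matrix.of_apply, Fin.val_zero]
    congr 1 <;> push_cast <;> omega
  rw [← hcorner]
  refine laurentSubalgebra.apply_mem_of_det_mem W 0 0 sC ?_
    (hW ▸ laurentSubalgebra.generator_mem sW) fun i j hij => ?_
  · rw [hC]
    congr 1
    refine Matrix.ext fun i j => ?_
    simp only [W, window, Matrix.submatrix_apply, Matrix.of_apply, Fin.succAbove_zero,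
      Fin.val_succ]
    congr 1 <;> push_cast <;> ring
  · simp only [ne_eq, Prod.mk.injEq, Fin.ext_iff, Fin.val_zero] at hij
    have := i.isLt
    have := j.isLt
    exact ih (by omega) (by omega) (by omega) (by omega)

theorem LaurentOnDiagonals.matrixEntry_mem_of_sub_eq_centralOffset_sub {y : ℕ}
    (ih : LaurentOnDiagonals n y) (hy : 1 ≤ y) {u v : ℤ}
    (huv : v - u = centralOffset n - y) (hvu : 1 ≤ v - u) :
    matrixEntry n u v ∈ laurentSubalgebra ℝ (smallCentralMinor n) := by
  have hc : centralOffset n = ((n : ℤ) - 1) / 2 := rfl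
  obtain ⟨sW, hW⟩ := exists_smallCentralMinor_eq_det_window n (u - y) (y := y + 1)
    zero_le_one (by omega) (by omega)
  obtain ⟨sC, hC⟩ := exists_smallCentralMinor_eq_det_window n (u - y) (y := y) le_rfl
    hy (by omega)
  set W := window n (u - y) (u - y + centralOffset n + (0 : ℕ)) (y + 1)
  have hcorner : W (Fin.last y) (Fin.last y) = matrixEntry n u v := by
    simp only [W, window, Matrix.of_apply, Fin.val_last]
    congr 1 <;> push_cast <;> omega
  rw [← hcorner]
  refine laurentSubalgebra.apply_mem_of_det_mem W _ _ sC ?_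
    (hW ▸ laurentSubalgebra.generator_mem sW) fun i j hij => ?_
  · rw [hC]
    congr 1
    refine Matrix.ext fun i j => ?_
    simp only [W, window, Matrix.submatrix_apply, Matrix.of_apply, Fin.succAbove_last,
      Fin.val_castSucc]
    congr 1
    push_cast
    ring
  · simp only [ne_eq, Prod.mk.injEq, Fin.ext_iff, Fin.val_last] at hij
    have := i.isLt
    have := j.isLt
    exact ih (by omega) (by omega) (by omega) (by omega)

theorem LaurentOnDiagonals.succ {y : ℕ} (ih : LaurentOnDiagonals n y) (hy : 1 ≤ y) :
    LaurentOnDiagonals n (y + 1) := by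
  intro u v h₁ h₂ h₃ h₄
  by_cases hold : centralOffset n + 1 - y ≤ v - u ∧ v - u ≤ centralOffset n + y
  · exact ih h₁ h₂ hold.1 hold.2
  rcases (by omega : v - u = centralOffset n + 1 + y ∨ v - u = centralOffset n - y) with h | h
  · exact ih.matrixEntry_mem_of_sub_eq_centralOffset_add_succ hy h h₂
  · exact ih.matrixEntry_mem_of_sub_eq_centralOffset_sub hy h h₁

theorem laurentOnDiagonals {y : ℕ} (hy : 1 ≤ y) : LaurentOnDiagonals n y := by
  induction y, hy using Nat.le_induction with
  | base => exact laurentOnDiagonals_one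
  | succ y hy ih => exact ih.succ hy

theorem matrixEntry_mem_of_not_dvd (hn : 0 < n) {u v : ℤ} (h : ¬ (n : ℤ) ∣ v - u) :
    matrixEntry n u v ∈ laurentSubalgebra ℝ (smallCentralMinor n) := by
  have hc : centralOffset n = ((n : ℤ) - 1) / 2 := rfl
  have hmod : matrixEntry n u v = matrixEntry n u (u + (v - u) % n) := by
    funext M
    simp only [matrixEntry]
    push_cast [ZMod.intCast_mod]
    ring_nf
  have h₀ : (v - u) % n ≠ 0 := fun h0 => h (Int.dvd_of_emod_eq_zero h0)
  have h₁ := Int.emod_nonneg (v - u) (b := n) (by omega)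
  have h₂ := Int.emod_lt_of_pos (v - u) (b := n) (by omega)
  rw [hmod]
  exact laurentOnDiagonals (y := n) hn (by omega) (by omega) (by omega) (by omega)

end CentralMinor

theorem minor_laurent_in_small_central_minors_general (n k : ℕ)
    (a b : Fin k → Fin n)
    (hdisj : ∀ i j : Fin k, a i ≠ b j) :
    ∃ (e : (SmallIdx n) →₀ ℕ) (p : MvPolynomial (SmallIdx n) ℝ),
      ∀ M : Matrix (ZMod n) (ZMod n) ℝ,
        Matrix.det (Matrix.of fun i j : Fin k =>
            M (((a i : ℕ) : ZMod n)) (((b j : ℕ) : ZMod n))) *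
          e.prod (fun s m => (centralMinor n M s.1.1 s.1.2) ^ m) =
          MvPolynomial.eval (fun s : SmallIdx n => centralMinor n M s.1.1 s.1.2) p := by
  have hentry (i j : Fin k) :
      matrixEntry n (a i : ℕ) (b j : ℕ) ∈ laurentSubalgebra ℝ (smallCentralMinor n) := by
    refine matrixEntry_mem_of_not_dvd (a i).pos fun hdvd => hdisj i j (Fin.ext ?_)
    have := Int.eq_zero_of_abs_lt_dvd hdvd (abs_sub_lt_iff.2 ⟨by omega, by omega⟩)
    omega
  obtain ⟨e, p, h⟩ := laurentSubalgebra.exists_forall_eval_eq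
    (Matrix.det_mem (A := Matrix.of fun i j => matrixEntry n (a i : ℕ) (b j : ℕ)) hentry)
  refine ⟨e, p, fun M => ?_⟩
  simpa only [Matrix.det_pi_apply, Matrix.of_apply, matrixEntry, smallCentralMinor,
    Int.cast_natCast] using h M

/-- For disjoint subsets `A = {a₁ < ⋯ < a_k}` and `B = {b₁ < ⋯ < b_k}` of the index set,
the minor `det((M_{aᵢ,bⱼ})ᵢⱼ)` is a Laurent polynomial in the small central minors:
there are a finitely supported exponent function `e` and a polynomial `p` such that, for
every `n × n` real matrix `M`,
`det((M_{aᵢ,bⱼ})) · ∏ CM_s(M)^{e(s)} = p((CM_s(M))_s)`. -/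
theorem minor_laurent_in_small_central_minors (n k : ℕ) [NeZero n]
    (a b : Fin k → Fin n) (ha : StrictMono a) (hb : StrictMono b)
    (hdisj : ∀ i j : Fin k, a i ≠ b j) :
    ∃ (e : (SmallIdx n) →₀ ℕ) (p : MvPolynomial (SmallIdx n) ℝ),
      ∀ M : Matrix (ZMod n) (ZMod n) ℝ,
        Matrix.det (Matrix.of fun i j : Fin k =>
            M (((a i : ℕ) : ZMod n)) (((b j : ℕ) : ZMod n))) *
          e.prod (fun s m => (centralMinor n M s.1.1 s.1.2) ^ m) =
          MvPolynomial.eval (fun s : SmallIdx n => centralMinor n M s.1.1 s.1.2) p :=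
  minor_laurent_in_small_central_minors_general n k a b hdisj
end

section
/- Let M be a symmetric n×n real matrix. If n is odd, then for all integers x and all y with 0 ≤ y ≤ n, the central minors satisfy CM_{x+n,y}(M) = CM_{x,y}(M). The same equality CM_{x+n,y}(M) = CM_{x,y}(M) also holds when n is even and x + y is odd. -/
/-!
Under the parity hypothesis the column start of `CM_{x,y}` equals the row start of `CM_{x+n,y}`;
applied at `x` and at `x + n`, the minor `CM_{x+n,y}` uses the columns of `CM_{x,y}` as rows and
its rows, shifted by `n`, as columns. The shift is invisible modulo `n`, and for symmetric `M`
transposing the minor (and reversing both index orders) exchanges rows and columns.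
-/

lemma contiguousMinor_periodic_right (n : ℕ) (M : Matrix (ZMod n) (ZMod n) ℝ) (a : ℤ) (y : ℕ) :
    Function.Periodic (fun b => contiguousMinor n M a b y) n := by
  intro b
  simp only [contiguousMinor]
  congr 2
  ext i j
  push_cast
  simp only [ZMod.natCast_self, add_zero]

lemma Matrix.IsSymm.contiguousMinor_comm {n : ℕ} {M : Matrix (ZMod n) (ZMod n) ℝ}
    (hM : M.IsSymm) (a b : ℤ) (y : ℕ) :
    contiguousMinor n M b a y = contiguousMinor n M a b y := by
  unfold contiguousMinor
  have hswap : (Matrix.of fun i j : Fin y =>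
        M (((b + (i : ℤ)) : ℤ) : ZMod n) (((a + (y : ℤ) - 1 - (j : ℤ)) : ℤ) : ZMod n))
      = (Matrix.of fun i j : Fin y =>
          M (((a + (i : ℤ)) : ℤ) : ZMod n)
            (((b + (y : ℤ) - 1 - (j : ℤ)) : ℤ) : ZMod n)).transpose.submatrix
        Fin.revPerm Fin.revPerm := by
    ext i j
    simp only [Matrix.submatrix_apply, Matrix.transpose_apply, Matrix.of_apply, Fin.revPerm_apply]
    rw [hM.apply]
    congr 2 <;> push_cast [Fin.val_rev] <;> omega
  rw [hswap, Matrix.det_submatrix_equiv_self, Matrix.det_transpose]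

lemma fdiv_colStart_eq_of_parity (n : ℕ) (x : ℤ) (y : ℕ)
    (h : Odd n ∨ (Even n ∧ Odd (x + (y : ℤ)))) :
    Int.fdiv (x - y + n - ((n - 1) % 2)) 2 = Int.fdiv (x + n - y) 2 := by
  rw [Int.fdiv_eq_ediv_of_nonneg _ zero_le_two, Int.fdiv_eq_ediv_of_nonneg _ zero_le_two]
  rcases h with hn | ⟨hn, hxy⟩
  · have := Int.odd_iff.mp (Int.odd_coe_nat n |>.mpr hn)
    omega
  · have := Int.even_iff.mp (Int.even_coe_nat n |>.mpr hn)
    have := Int.odd_iff.mp hxy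
    omega

lemma centralMinor_eq_of_parity (n : ℕ) (M : Matrix (ZMod n) (ZMod n) ℝ) (x : ℤ) (y : ℕ)
    (h : Odd n ∨ (Even n ∧ Odd (x + (y : ℤ)))) :
    centralMinor n M x y = contiguousMinor n M (Int.fdiv (x - y) 2) (Int.fdiv (x + n - y) 2) y := by
  rw [centralMinor, fdiv_colStart_eq_of_parity n x y h]

theorem centralMinor_shift_of_symm_general (n : ℕ)
    (M : Matrix (ZMod n) (ZMod n) ℝ) (hM : M.IsSymm)
    (x : ℤ) (y : ℕ)
    (h : Odd n ∨ (Even n ∧ Odd (x + (y : ℤ)))) :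
    centralMinor n M (x + (n : ℤ)) y = centralMinor n M x y := by
  have h' : Odd n ∨ (Even n ∧ Odd (x + n + (y : ℤ))) := by
    rcases h with hn | ⟨hn, hxy⟩
    · exact .inl hn
    · refine .inr ⟨hn, ?_⟩
      rw [add_right_comm]
      exact hxy.add_even (Int.even_coe_nat n |>.mpr hn)
  have hcol : Int.fdiv (x + n + n - y) 2 = Int.fdiv (x - y) 2 + n := by
    rw [Int.fdiv_eq_ediv_of_nonneg _ zero_le_two, Int.fdiv_eq_ediv_of_nonneg _ zero_le_two]
    omega
  rw [centralMinor_eq_of_parity n M _ y h', centralMinor_eq_of_parity n M x y h, hcol]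
  exact (contiguousMinor_periodic_right n M _ y _).trans (hM.contiguousMinor_comm _ _ y)

/-- For a symmetric `n × n` real matrix `M`, if `n` is odd, or if `n` is even and
`x + y` is odd, then `CM_{x+n,y}(M) = CM_{x,y}(M)` for all integers `x` and all
`0 ≤ y ≤ n`. -/
theorem centralMinor_shift_of_symm (n : ℕ) [NeZero n]
    (M : Matrix (ZMod n) (ZMod n) ℝ) (hM : M.IsSymm)
    (x : ℤ) (y : ℕ) (hy : y ≤ n)
    (h : Odd n ∨ (Even n ∧ Odd (x + (y : ℤ)))) :
    centralMinor n M (x + (n : ℤ)) y = centralMinor n M x y :=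
  centralMinor_shift_of_symm_general n M hM x y h
end

section
/- Fix n ≥ 1 and integers x, y with 1 ≤ y, and suppose that either 2y < n, or 2y = n and x + y is odd. Let a = ⌊(x−y)/2⌋ and b = ⌊(x−y+n−((n−1) mod 2))/2⌋. Then the row index set {a, a+1, …, a+y−1} and the column index set {b, b+1, …, b+y−1} of the central minor CM_{x,y}, both taken as subsets of the residues modulo n, are disjoint. -/
/-!
Since `n - ((n - 1) mod 2)` is always odd, namely `2 ⌊(n - 1)/2⌋ + 1`, the column start exceeds
the row start by `⌊(n - 1)/2⌋ + ((x - y) mod 2)`. Under either hypothesis this offset lies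
between `y` and `n - y`, so every difference between a column index and a row index lies
strictly between `0` and `n` and cannot vanish modulo `n`.
-/

theorem ZMod.intCast_ne_of_lt_of_lt_add {n : ℕ} {a b : ℤ} (hab : a < b) (hba : b < a + n) :
    (a : ZMod n) ≠ b := by
  rw [Ne, ZMod.intCast_eq_intCast_iff_dvd_sub]
  intro hdvd
  have := Int.le_of_dvd (by omega) hdvd
  omega

theorem Int.fdiv_two_add_sub_fdiv_two (m N : ℤ) :
    Int.fdiv (m + N - (N - 1) % 2) 2 - Int.fdiv m 2 = (N - 1) / 2 + m % 2 := by
  rw [Int.fdiv_eq_ediv_of_nonneg _ zero_le_two, Int.fdiv_eq_ediv_of_nonneg _ zero_le_two]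
  omega

theorem centralMinor_row_col_disjoint_general (n : ℕ) (x : ℤ) (y : ℕ)
    (h : 2 * y < n ∨ (2 * y = n ∧ Odd (x + (y : ℤ)))) :
    ∀ i j : Fin y,
      ((Int.fdiv (x - (y : ℤ)) 2 + (i : ℤ) : ℤ) : ZMod n) ≠
      ((Int.fdiv (x - (y : ℤ) + (n : ℤ) - (((n : ℤ) - 1) % 2)) 2 + (j : ℤ) : ℤ) : ZMod n) := by
  intro i j
  have hoffset := Int.fdiv_two_add_sub_fdiv_two (x - y) n
  have hi := i.isLt
  have hj := j.isLt
  rcases h with hsmall | ⟨hhalf, hodd⟩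
  · exact ZMod.intCast_ne_of_lt_of_lt_add (by omega) (by omega)
  · rw [Int.odd_iff] at hodd
    exact ZMod.intCast_ne_of_lt_of_lt_add (by omega) (by omega)

/-- For `n ≥ 1` and integers `x, y` with `1 ≤ y` and either `2y < n`, or `2y = n` and
`x + y` odd, the row index set `{a, a+1, …, a+y-1}` and the column index set
`{b, b+1, …, b+y-1}` of the central minor `CM_{x,y}`, taken as subsets of the residues
modulo `n`, are disjoint.  Here `a = ⌊(x-y)/2⌋` and `b = ⌊(x-y+n-((n-1) mod 2))/2⌋`. -/
theorem centralMinor_row_col_disjoint (n : ℕ) [NeZero n] (x : ℤ) (y : ℕ) (hy : 1 ≤ y)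
    (h : 2 * y < n ∨ (2 * y = n ∧ Odd (x + (y : ℤ)))) :
    ∀ i j : Fin y,
      ((Int.fdiv (x - (y : ℤ)) 2 + (i : ℤ) : ℤ) : ZMod n) ≠
      ((Int.fdiv (x - (y : ℤ) + (n : ℤ) - (((n : ℤ) - 1) % 2)) 2 + (j : ℤ) : ℤ) : ZMod n) :=
  centralMinor_row_col_disjoint_general n x y h
end
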